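/- Let 𝓕 = {[0), [1)}. If e is a monoid endomorphism of B_ω^𝓕 and there exist F ∈ 𝓕 and two distinct pairs (i₁,j₁) ≠ (i₂,j₂) in ω × ω with (i₁,j₁,F)e = (i₂,j₂,F)e, then e is the annihilating endomorphism, i.e., (i,j,G)e = (0,0,[0)) for all i,j ∈ ω and G ∈ 𝓕. -/
import Mathlib


/-- `[a) = {x ∈ ω : x ≥ a}`. -/
def seg (a : ℕ) : Set ℕ := {x | a ≤ x}

/-- `n + F` taken within `ω`: `{x ∈ ω : x = n + k for some k ∈ F}`. -/
def shift (n : ℤ) (F : Set ℕ) : Set ℕ := {x | ∃ k ∈ F, (x : ℤ) = n + k}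

/-- The carrier `B_ω × 𝒫(ω)`. -/
abbrev BF := ℕ × ℕ × Set ℕ

/-- The multiplication on `B_ω × 𝒫(ω)`. -/
def bfMul (x y : BF) : BF :=
  if x.2.1 ≤ y.1 then
    (x.1 + (y.1 - x.2.1), y.2.1, shift ((x.2.1 : ℤ) - y.1) x.2.2 ∩ y.2.2)
  else
    (x.1, (x.2.1 - y.1) + y.2.1, x.2.2 ∩ shift ((y.1 : ℤ) - x.2.1) y.2.2)

/-- The family `𝓕 = {[0), [1)}`. -/
def Fam : Set (Set ℕ) := {seg 0, seg 1}

/-- The carrier of the monoid `B_ω^𝓕` for `𝓕 = {[0),[1)}`. -/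
def Dom : Set BF := {x | x.2.2 ∈ Fam}

/-- The map `γ_k`. -/
def gam (k : ℕ) : BF → BF := fun x => (k * x.1, k * x.2.1, seg 0)

open Classical

/-- The map `δ_k`. -/
noncomputable def del (k : ℕ) : BF → BF := fun x =>
  if x.2.2 = seg 1 then (k * (x.1 + 1), k * (x.2.1 + 1), seg 0)
  else (k * x.1, k * x.2.1, seg 0)

/-- `e` is a monoid endomorphism of `B_ω^𝓕` for `𝓕 = {[0),[1)}`. -/
def IsMonEnd (e : BF → BF) : Prop :=
  (∀ x ∈ Dom, e x ∈ Dom) ∧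
  e (0, 0, seg 0) = (0, 0, seg 0) ∧
  ∀ x ∈ Dom, ∀ y ∈ Dom, e (bfMul x y) = bfMul (e x) (e y)

lemma shift_seg (n : ℤ) (a : ℕ) : shift n (seg a) = seg (a + n).toNat := by
  ext x
  simp only [shift, seg, Set.mem_setOf_eq]
  constructor
  · rintro ⟨k, hk, hx⟩; omega
  · intro h; exact ⟨((x : ℤ) - n).toNat, by omega, by omega⟩
lemma seg_zero_univ : seg 0 = Set.univ := by ext x; simp [seg]
lemma inter_seg_zero (F : Set ℕ) : F ∩ seg 0 = F := by rw [seg_zero_univ]; simp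
lemma seg_zero_inter (F : Set ℕ) : seg 0 ∩ F = F := by rw [seg_zero_univ]; simp
lemma shift_zero' (F : Set ℕ) : shift 0 F = F := by ext x; simp [shift]
lemma seg_inter (a b : ℕ) : seg a ∩ seg b = seg (max a b) := by
  ext x
  simp only [seg, Set.mem_inter_iff, Set.mem_setOf_eq, max_le_iff]
lemma seg_inj {a b : ℕ} (h : seg a = seg b) : a = b := by
  have h1 := Set.ext_iff.mp h a
  have h2 := Set.ext_iff.mp h b
  simp [seg] at h1 h2
  omega
lemma shift_nonpos (n : ℤ) (h : n ≤ 0) : shift n (seg 0) = seg 0 := by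
  rw [shift_seg]
  have h2 : ((0:ℕ) + n).toNat = 0 := by omega
  rw [h2]
lemma bfMul_le {j a : ℕ} (i b : ℕ) (U V : Set ℕ) (h : j ≤ a) :
    bfMul (i, j, U) (a, b, V) = (i + (a - j), b, shift ((j:ℤ) - a) U ∩ V) := by
  simp only [bfMul]
  rw [if_pos h]
lemma bfMul_ge {j a : ℕ} (i b : ℕ) (U V : Set ℕ) (h : ¬ j ≤ a) :
    bfMul (i, j, U) (a, b, V) = (i, (j - a) + b, U ∩ shift ((a:ℤ) - j) V) := by
  simp only [bfMul]
  rw [if_neg h]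
lemma triple_eq {x1 x2 y1 y2 : ℕ} {S T : Set ℕ} (h1 : x1 = x2) (h2 : y1 = y2)
    (h3 : S = T) : ((x1, y1, S) : BF) = (x2, y2, T) := by
  subst h1 h2 h3; rfl
lemma bf_one_mul (x : BF) : bfMul (0, 0, seg 0) x = x := by
  obtain ⟨i, j, G⟩ := x
  rw [bfMul_le _ _ _ _ (Nat.zero_le i), shift_nonpos _ (by omega), seg_zero_inter]
  exact triple_eq (by omega) rfl rfl
lemma bf_mul_one (x : BF) : bfMul x (0, 0, seg 0) = x := by
  obtain ⟨i, j, G⟩ := x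
  by_cases h : j ≤ 0
  · have hj : j = 0 := by omega
    subst hj
    rw [bfMul_le _ _ _ _ le_rfl]
    simp only [Nat.cast_zero, sub_self, shift_zero']
    rw [inter_seg_zero]
    exact triple_eq (by omega) rfl rfl
  · rw [bfMul_ge _ _ _ _ h, shift_nonpos _ (by omega), inter_seg_zero]
    exact triple_eq rfl (by omega) rfl

/-- If a monoid endomorphism of `B_ω^𝓕` identifies two distinct elements with the same
third coordinate `F ∈ 𝓕`, then it is annihilating. -/
theorem stmt9 (e : BF → BF) (he : IsMonEnd e)
    (F : Set ℕ) (hF : F ∈ Fam) (i₁ j₁ i₂ j₂ : ℕ)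
    (hne : (i₁, j₁) ≠ (i₂, j₂))
    (heq : e (i₁, j₁, F) = e (i₂, j₂, F)) :
    ∀ i j : ℕ, ∀ G ∈ Fam, e (i, j, G) = (0, 0, seg 0) := by
  obtain ⟨hdom, hid, hmul⟩ := he
  have memA : ∀ (i j : ℕ), ((i, j, seg 0) : BF) ∈ Dom := fun i j => by
    simp [Dom, Fam]
  have memB : ∀ (i j : ℕ), ((i, j, seg 1) : BF) ∈ Dom := fun i j => by
    simp [Dom, Fam]
  obtain ⟨a, b, A, hPdef⟩ : ∃ a b A, e (1, 0, seg 0) = (a, b, A) := ⟨_, _, _, rfl⟩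
  obtain ⟨c, d, C, hQdef⟩ : ∃ c d C, e (0, 1, seg 0) = (c, d, C) := ⟨_, _, _, rfl⟩
  have hA : A = seg 0 ∨ A = seg 1 := by
    have := hdom _ (memA 1 0); rw [hPdef] at this; simpa [Dom, Fam] using this
  have hC : C = seg 0 ∨ C = seg 1 := by
    have := hdom _ (memA 0 1); rw [hQdef] at this; simpa [Dom, Fam] using this
  have hqp : bfMul ((0, 1, seg 0) : BF) (1, 0, seg 0) = ((0, 0, seg 0) : BF) := by
    rw [bfMul_le _ _ _ _ le_rfl, shift_nonpos _ (by omega), seg_zero_inter]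
  have hQP : bfMul (c, d, C) (a, b, A) = ((0, 0, seg 0) : BF) := by
    rw [← hPdef, ← hQdef, ← hmul _ (memA 0 1) _ (memA 1 0), hqp, hid]
  have key : a = d ∧ c = 0 ∧ b = 0 ∧ A = seg 0 ∧ C = seg 0 := by
    by_cases hle : d ≤ a
    · rw [bfMul_le _ _ _ _ hle] at hQP
      simp only [Prod.mk.injEq] at hQP
      obtain ⟨h1, h2, h3⟩ := hQP
      have had : a = d := by omega
      have hc0 : c = 0 := by omega
      refine ⟨had, hc0, h2, ?_, ?_⟩ <;>
      · rcases hC with rfl | rfl <;> rcases hA with rfl | rfl <;>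
          rw [shift_seg, seg_inter] at h3 <;>
          have h4 := seg_inj h3 <;>
          first
            | rfl
            | (exfalso; omega)
    · exfalso
      rw [bfMul_ge _ _ _ _ hle] at hQP
      simp only [Prod.mk.injEq] at hQP
      omega
  obtain ⟨had, hc0, hb0, hA0, hC0⟩ := key
  subst hc0 hb0 hA0 hC0
  rw [← had] at hQdef
  clear had hA hC hQP
  -- powers of p and q
  have hp_pow : ∀ i : ℕ, e (i, 0, seg 0) = (a * i, 0, seg 0) := by
    intro i
    induction i with
    | zero => rw [hid]; exact (triple_eq (by omega) rfl rfl).symm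
    | succ i ih =>
      have hsplit : bfMul ((1, 0, seg 0) : BF) (i, 0, seg 0) = ((i + 1, 0, seg 0) : BF) := by
        rw [bfMul_le _ _ _ _ (Nat.zero_le i), shift_nonpos _ (by omega), seg_zero_inter]
        exact triple_eq (by omega) rfl rfl
      rw [← hsplit, hmul _ (memA 1 0) _ (memA i 0), hPdef, ih,
        bfMul_le _ _ _ _ (Nat.zero_le _), shift_nonpos _ (by omega), seg_zero_inter]
      exact triple_eq (by rw [Nat.mul_succ]; omega) rfl rfl
  have hq_pow : ∀ j : ℕ, e (0, j, seg 0) = (0, a * j, seg 0) := by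
    intro j
    induction j with
    | zero => rw [hid]; exact (triple_eq rfl (by omega) rfl).symm
    | succ j ih =>
      have hsplit : bfMul ((0, j, seg 0) : BF) (0, 1, seg 0) = ((0, j + 1, seg 0) : BF) := by
        by_cases h : j ≤ 0
        · have hj : j = 0 := by omega
          subst hj
          rw [bfMul_le _ _ _ _ (Nat.zero_le _), shift_nonpos _ (by omega), seg_zero_inter]
        · rw [bfMul_ge _ _ _ _ h, shift_nonpos _ (by omega), inter_seg_zero]
          exact triple_eq rfl (by omega) rfl
      rw [← hsplit, hmul _ (memA 0 j) _ (memA 0 1), hQdef, ih]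
      by_cases h : a * j ≤ 0
      · rw [bfMul_le _ _ _ _ (h.trans (Nat.zero_le _)), shift_nonpos _ (by omega),
          seg_zero_inter]
        exact triple_eq (by omega) (by rw [Nat.mul_succ]; omega) rfl
      · rw [bfMul_ge _ _ _ _ h, shift_nonpos _ (by omega), inter_seg_zero]
        exact triple_eq rfl (by rw [Nat.mul_succ]; omega) rfl
  have h0form : ∀ i j : ℕ, e (i, j, seg 0) = (a * i, a * j, seg 0) := by
    intro i j
    have hsplit : bfMul ((i, 0, seg 0) : BF) (0, j, seg 0) = ((i, j, seg 0) : BF) := by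
      rw [bfMul_le _ _ _ _ le_rfl, shift_nonpos _ (by omega), seg_zero_inter]
      exact triple_eq (by omega) rfl rfl
    rw [← hsplit, hmul _ (memA i 0) _ (memA 0 j), hp_pow, hq_pow,
      bfMul_le _ _ _ _ (Nat.zero_le _), shift_nonpos _ (by omega), seg_zero_inter]
    exact triple_eq (by omega) rfl rfl
  -- E = e(0,0,seg 1)
  obtain ⟨u, v, U, hEdef⟩ : ∃ u v U, e (0, 0, seg 1) = (u, v, U) := ⟨_, _, _, rfl⟩
  have hU : U = seg 0 ∨ U = seg 1 := by
    have := hdom _ (memB 0 0); rw [hEdef] at this; simpa [Dom, Fam] using this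
  have he1 : bfMul ((0, 0, seg 1) : BF) (0, 0, seg 1) = ((0, 0, seg 1) : BF) := by
    rw [bfMul_le _ _ _ _ le_rfl]
    simp only [Nat.cast_zero, sub_self, shift_zero']
    rw [Set.inter_self]
  have hEE : bfMul (u, v, U) (u, v, U) = ((u, v, U) : BF) := by
    rw [← hEdef, ← hmul _ (memB 0 0) _ (memB 0 0), he1]
  have huv : u = v := by
    by_cases h : v ≤ u
    · rw [bfMul_le _ _ _ _ h] at hEE
      simp only [Prod.mk.injEq] at hEE
      omega
    · rw [bfMul_ge _ _ _ _ h] at hEE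
      simp only [Prod.mk.injEq] at hEE
      omega
  subst huv
  -- q * e1 = q
  have hq_e1 : bfMul ((0, 1, seg 0) : BF) (0, 0, seg 1) = ((0, 1, seg 0) : BF) := by
    rw [bfMul_ge _ _ _ _ (by omega), shift_seg]
    have h2 : ((1:ℕ) + (((0:ℕ):ℤ) - ((1:ℕ):ℤ))).toNat = 0 := by omega
    rw [h2, inter_seg_zero]
  have hrel : bfMul (bfMul ((0, a, seg 0) : BF) (u, u, U)) (a, 0, seg 0)
      = ((0, 0, seg 0) : BF) := by
    rw [← hQdef, ← hEdef, ← hPdef, ← hmul _ (memA 0 1) _ (memB 0 0), hq_e1,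
      ← hmul _ (memA 0 1) _ (memA 1 0), hqp, hid]
  -- formula for seg 1 elements
  have h1form : ∀ i j : ℕ, e (i, j, seg 1) = (a * i + u, a * j + u, U) := by
    intro i j
    have hin : bfMul ((0, 0, seg 1) : BF) (0, j, seg 0) = ((0, j, seg 1) : BF) := by
      rw [bfMul_le _ _ _ _ le_rfl]
      simp only [Nat.cast_zero, sub_self, shift_zero']
      rw [inter_seg_zero]
    have hout : bfMul ((i, 0, seg 0) : BF) (0, j, seg 1) = ((i, j, seg 1) : BF) := by
      rw [bfMul_le _ _ _ _ le_rfl, shift_nonpos _ (by omega), seg_zero_inter]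
      exact triple_eq (by omega) rfl rfl
    have hstep1 : bfMul ((u, u, U) : BF) (0, a * j, seg 0) = ((u, u + a * j, U) : BF) := by
      by_cases h : u ≤ 0
      · have hu : u = 0 := by omega
        subst hu
        rw [bfMul_le _ _ _ _ (Nat.zero_le _)]
        simp only [Nat.cast_zero, sub_self, shift_zero']
        rw [inter_seg_zero]
        exact triple_eq (by omega) (by omega) rfl
      · rw [bfMul_ge _ _ _ _ h, shift_nonpos _ (by omega), inter_seg_zero]
        exact triple_eq rfl (by omega) rfl
    rw [← hout, hmul _ (memA i 0) _ (memB 0 j), ← hin,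
      hmul _ (memB 0 0) _ (memA 0 j), hp_pow, hq_pow, hEdef, hstep1,
      bfMul_le _ _ _ _ (Nat.zero_le _), shift_nonpos _ (by omega), seg_zero_inter]
    exact triple_eq (by omega) (by omega) rfl
  -- derive a = 0
  have hFam : F = seg 0 ∨ F = seg 1 := by simpa [Fam] using hF
  have hne' : ¬ (i₁ = i₂ ∧ j₁ = j₂) := by
    rintro ⟨rfl, rfl⟩; exact hne rfl
  have ha0 : a = 0 := by
    by_contra hd
    have hdpos : 0 < a := Nat.pos_of_ne_zero hd
    rcases hFam with rfl | rfl
    · rw [h0form, h0form] at heq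
      simp only [Prod.mk.injEq] at heq
      exact hne' ⟨Nat.eq_of_mul_eq_mul_left hdpos heq.1,
        Nat.eq_of_mul_eq_mul_left hdpos heq.2.1⟩
    · rw [h1form, h1form] at heq
      simp only [Prod.mk.injEq] at heq
      obtain ⟨h1, h2, _⟩ := heq
      exact hne' ⟨Nat.eq_of_mul_eq_mul_left hdpos (by omega),
        Nat.eq_of_mul_eq_mul_left hdpos (by omega)⟩
  subst ha0
  rw [bf_one_mul, bf_mul_one] at hrel
  simp only [Prod.mk.injEq] at hrel
  obtain ⟨hu0, -, hU0⟩ := hrel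
  subst hu0 hU0
  intro i j G hG
  have hG' : G = seg 0 ∨ G = seg 1 := by simpa [Fam] using hG
  rcases hG' with rfl | rfl
  · rw [h0form]
    exact triple_eq (by omega) (by omega) rfl
  · rw [h1form]
    exact triple_eq (by omega) (by omega) rfl
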